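/- Let D be the Toeplitz digraph of T_n⟨S;T⟩ with max S + min T ≤ n and min S + max T ≤ n, and let d = gcd{s + t : s ∈ S, t ∈ T}. Then there exists a positive integer M such that for every integer i ≥ M one has P_i = Q_i = R_i. -/

import Mathlib

/-- The Toeplitz digraph of `T_n⟨S;T⟩`: vertices are integers in `[1, n]`, and
there is an arc `(u, v)` iff `v − u ∈ S` or `u − v ∈ T`. -/
def ToepArc (n : ℕ) (S T : Finset ℕ) (u v : ℤ) : Prop :=
  u ∈ Finset.Icc (1 : ℤ) (n : ℤ) ∧ v ∈ Finset.Icc (1 : ℤ) (n : ℤ) ∧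
    ((∃ s ∈ S, v = u + (s : ℤ)) ∨ (∃ t ∈ T, v = u - (t : ℤ)))

/-- There is a directed `(u,v)`-walk of length `m` in the Toeplitz digraph. -/
def HasWalk (n : ℕ) (S T : Finset ℕ) (m : ℕ) (u v : ℤ) : Prop :=
  ∃ w : ℕ → ℤ, w 0 = u ∧ w m = v ∧ ∀ i < m, ToepArc n S T (w i) (w (i + 1))

/-!
Write `σ = min S` and `τ = min T`. A walk of length `m` moves by `∑ aⱼ sⱼ - ∑ bₖ tₖ` with
`∑ aⱼ + ∑ bₖ = m`, which gives `R_i ⊆ Q_i`; as `sⱼ ≡ σ` and `-tₖ ≡ σ` modulo `d`, also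
`Q_i ⊆ P_i`.

Conversely, since `σ + τ ≤ n`, the steps `+σ` and `-τ` alone lead from `u` to `v` in any number
`m ≥ n - 1` of steps with `v - u + m τ ≡ 0 (mod σ + τ)`: step up whenever possible. Inserting one
step `+sⱼ` (near the vertex `1`) or `-tₖ` (near `n`) shifts this quantity by `sⱼ + τ` or `τ - tₖ`.
The shifts achievable by walks of bounded length form a subgroup of `ℤ` containing every
`sⱼ + tₖ`, hence `d`. So for large `i` a short walk corrects `v - u + i τ` modulo `σ + τ`, and
steps `+σ`, `-τ` complete it to a walk of length `i`: `P_i ⊆ R_i`.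
-/

open Finset

section Walks

variable {n : ℕ} {S T : Finset ℕ}

theorem hasWalk_zero_iff {u v : ℤ} : HasWalk n S T 0 u v ↔ u = v :=
  ⟨fun ⟨_, h0, h1, _⟩ => h0.symm.trans h1, fun h => ⟨fun _ => u, rfl, h, by simp⟩⟩

theorem hasWalk_succ_iff {m : ℕ} {u v : ℤ} :
    HasWalk n S T (m + 1) u v ↔ ∃ x, ToepArc n S T u x ∧ HasWalk n S T m x v := by
  constructor
  · rintro ⟨w, rfl, rfl, hw⟩
    exact ⟨w 1, hw 0 m.succ_pos, fun i => w (i + 1), rfl, rfl, fun i hi => hw (i + 1) (by omega)⟩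
  · rintro ⟨x, hux, w, rfl, rfl, hw⟩
    refine ⟨fun i => if i = 0 then u else w (i - 1), rfl, by simp, ?_⟩
    rintro (_ | i) hi
    · simpa using hux
    · simpa using hw i (by omega)

theorem ToepArc.hasWalk_one {u v : ℤ} (h : ToepArc n S T u v) : HasWalk n S T 1 u v :=
  hasWalk_succ_iff.2 ⟨v, h, hasWalk_zero_iff.2 rfl⟩

theorem HasWalk.append {m m' : ℕ} {u x v : ℤ} (h : HasWalk n S T m u x)
    (h' : HasWalk n S T m' x v) : HasWalk n S T (m + m') u v := by
  induction m generalizing u with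
  | zero => rwa [hasWalk_zero_iff.1 h, zero_add]
  | succ m ih =>
    obtain ⟨y, huy, hy⟩ := hasWalk_succ_iff.1 h
    rw [Nat.add_right_comm]
    exact hasWalk_succ_iff.2 ⟨y, huy, ih hy⟩

theorem HasWalk.mem_Icc_right {m : ℕ} {u v : ℤ} (h : HasWalk n S T m u v)
    (hu : u ∈ Icc (1 : ℤ) n) : v ∈ Icc (1 : ℤ) n := by
  cases m with
  | zero => rwa [← hasWalk_zero_iff.1 h]
  | succ m =>
    obtain ⟨w, -, rfl, hw⟩ := h
    exact (hw m m.lt_succ_self).2.1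

theorem HasWalk.exists_counts {ι κ : Type*} [Fintype ι] [Fintype κ] {s : ι → ℕ} {t : κ → ℕ}
    {m : ℕ} {u v : ℤ} (h : HasWalk n (univ.image s) (univ.image t) m u v) :
    ∃ (a : ι → ℕ) (b : κ → ℕ), ∑ j, a j + ∑ k, b k = m ∧
      v - u = ∑ j, (a j : ℤ) * s j - ∑ k, (b k : ℤ) * t k := by
  classical
  induction m generalizing u with
  | zero => exact ⟨0, 0, by simp, by simp [hasWalk_zero_iff.1 h]⟩
  | succ m ih =>
    obtain ⟨x, ⟨-, -, hux⟩, hx⟩ := hasWalk_succ_iff.1 h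
    obtain ⟨a, b, hab, hv⟩ := ih hx
    rcases hux with ⟨_, hs, rfl⟩ | ⟨_, ht, rfl⟩
    · obtain ⟨j, -, rfl⟩ := mem_image.1 hs
      refine ⟨a + Pi.single j 1, b, ?_, ?_⟩
      · simp only [Pi.add_apply, sum_add_distrib, sum_pi_single', mem_univ, ↓reduceIte, ← hab]
        ring
      · simp only [Pi.add_apply, Pi.single_apply, Nat.cast_add, Nat.cast_ite, Nat.cast_one,
          CharP.cast_eq_zero, add_mul, ite_mul, one_mul, zero_mul, sum_add_distrib, sum_ite_eq',
          mem_univ, ↓reduceIte]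
        linarith
    · obtain ⟨k, -, rfl⟩ := mem_image.1 ht
      refine ⟨a, b + Pi.single k 1, ?_, ?_⟩
      · simp only [Pi.add_apply, sum_add_distrib, sum_pi_single', mem_univ, ↓reduceIte, ← hab]
        ring
      · simp only [Pi.add_apply, Pi.single_apply, Nat.cast_add, Nat.cast_ite, Nat.cast_one,
          CharP.cast_eq_zero, add_mul, ite_mul, one_mul, zero_mul, sum_add_distrib, sum_ite_eq',
          mem_univ, ↓reduceIte]
        linarith

end Walks

theorem dvd_sum_mul_sub_sum_mul_sub {ι κ : Type*} [Fintype ι] [Fintype κ] {d : ℤ}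
    {s : ι → ℕ} {t : κ → ℕ} (hd : ∀ j k, d ∣ s j + t k) (j₀ : ι) (k₀ : κ)
    (a : ι → ℕ) (b : κ → ℕ) :
    d ∣ ∑ j, (a j : ℤ) * s j - ∑ k, (b k : ℤ) * t k - ((∑ j, a j + ∑ k, b k : ℕ) : ℤ) * s j₀ := by
  have : ∑ j, (a j : ℤ) * s j - ∑ k, (b k : ℤ) * t k - ((∑ j, a j + ∑ k, b k : ℕ) : ℤ) * s j₀
      = ∑ j, (a j : ℤ) * ((s j + t k₀) - (s j₀ + t k₀)) - ∑ k, (b k : ℤ) * (s j₀ + t k) := by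
    push_cast
    simp only [mul_sub, mul_add, sum_sub_distrib, sum_add_distrib, add_mul, sum_mul]
    ring
  rw [this]
  exact dvd_sub (dvd_sum fun j _ => (dvd_sub (hd j k₀) (hd j₀ k₀)).mul_left _)
    (dvd_sum fun k _ => (hd j₀ k).mul_left _)

theorem exists_dvd_mul_sub (L : ℕ) {g : ℕ} (hg : 0 < g) (τ : ℕ) {a : ℤ}
    (ha : (Nat.gcd τ g : ℤ) ∣ a) : ∃ m : ℕ, L ≤ m ∧ m < L + g ∧ (g : ℤ) ∣ m * τ - a := by
  obtain ⟨q, rfl⟩ := ha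
  set x := Int.gcdA τ g * q
  have hx : (g : ℤ) ∣ x * τ - Nat.gcd τ g * q :=
    ⟨-(Int.gcdB τ g * q), by rw [← Int.gcd_natCast_natCast, Int.gcd_eq_gcd_ab]; ring⟩
  have hr0 := Int.emod_nonneg (x - L) (by omega : (g : ℤ) ≠ 0)
  have hrg := Int.emod_lt_of_pos (x - L) (by omega : (0 : ℤ) < g)
  refine ⟨L + ((x - L) % g).toNat, by omega, by omega, ?_⟩
  have hr : (g : ℤ) ∣ (x - L) % g - (x - L) := (Int.mod_modEq _ _).symm.dvd
  have : ((L + ((x - L) % g).toNat : ℕ) : ℤ) * τ - Nat.gcd τ g * q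
      = ((x - L) % g - (x - L)) * τ + (x * τ - Nat.gcd τ g * q) := by
    push_cast; rw [Int.toNat_of_nonneg hr0]; ring
  rw [this]
  exact (hr.mul_right _).add hx

section TwoLetter

variable {n : ℕ} {S T : Finset ℕ} {σ τ : ℕ}

theorem hasWalk_of_eq_add_sub (hσ : σ ∈ S) (hτ : τ ∈ T) (hστ : σ + τ ≤ n) {A B : ℕ} {u v : ℤ}
    (hu : u ∈ Icc (1 : ℤ) n) (hv : v ∈ Icc (1 : ℤ) n) (h : v = u + A * σ - B * τ) :
    HasWalk n S T (A + B) u v := by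
  induction hm : A + B generalizing A B u with
  | zero =>
    obtain ⟨rfl, rfl⟩ : A = 0 ∧ B = 0 := by omega
    exact hasWalk_zero_iff.2 (by simpa using h.symm)
  | succ m ih =>
    rw [mem_Icc] at hu hv
    by_cases hup : 0 < A ∧ u + σ ≤ n
    · obtain ⟨A, rfl⟩ := Nat.exists_eq_add_one_of_ne_zero hup.1.ne'
      have harc : ToepArc n S T u (u + σ) :=
        ⟨mem_Icc.2 (by omega), mem_Icc.2 (by omega), .inl ⟨σ, hσ, rfl⟩⟩
      exact hasWalk_succ_iff.2 ⟨_, harc, ih (A := A) (B := B) (mem_Icc.2 (by omega))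
        (by push_cast at h; linarith) (by omega)⟩
    · have hAσ : A = 0 ∨ 0 < A ∧ (σ : ℤ) ≤ A * σ := by
        rcases A with _ | A
        · simp
        · right; push_cast; constructor <;> nlinarith
      obtain ⟨B, rfl⟩ : ∃ B', B = B' + 1 := Nat.exists_eq_add_one.2 (by
        by_contra! hB
        obtain rfl : B = 0 := by omega
        rcases hAσ with rfl | ⟨-, hAσ⟩ <;> push_cast at h <;> omega)
      have hBτ : (τ : ℤ) ≤ (B + 1) * τ := by nlinarith
      push_cast at h
      -- If `u + σ > n`, then `u > τ` because `σ + τ ≤ n`; if `A = 0`, then `u - τ ≥ v`.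
      have hdown : 1 ≤ u - τ := by rcases hAσ with rfl | ⟨_, _⟩ <;> push_cast at h <;> omega
      have harc : ToepArc n S T u (u - τ) :=
        ⟨mem_Icc.2 (by omega), mem_Icc.2 (by omega), .inr ⟨τ, hτ, rfl⟩⟩
      exact hasWalk_succ_iff.2 ⟨_, harc, ih (A := A) (B := B) (mem_Icc.2 (by omega))
        (by linarith) (by omega)⟩

structure IsStepPair (n : ℕ) (S T : Finset ℕ) (σ τ : ℕ) : Prop where
  left_mem : σ ∈ S
  right_mem : τ ∈ T
  left_pos : 0 < σ
  right_pos : 0 < τ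
  add_le : σ + τ ≤ n

theorem IsStepPair.add_pos (hστ : IsStepPair n S T σ τ) : 0 < σ + τ :=
  Nat.add_pos_left hστ.left_pos τ

theorem IsStepPair.hasWalk_of_dvd (hστ : IsStepPair n S T σ τ) {m : ℕ} {u v : ℤ}
    (hm : n ≤ m + 1) (hu : u ∈ Icc (1 : ℤ) n) (hv : v ∈ Icc (1 : ℤ) n)
    (h : ((σ : ℤ) + τ) ∣ v - u + m * τ) : HasWalk n S T m u v := by
  obtain ⟨hσ, hτ, hσ0, hτ0, hστ⟩ := hστ
  obtain ⟨A, hA⟩ := h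
  rw [mem_Icc] at hu hv
  have hmτ : (m : ℤ) ≤ m * τ := by nlinarith
  have hmσ : (m : ℤ) ≤ m * σ := by nlinarith
  have hA0 : 0 ≤ A := by nlinarith
  have hAm : A ≤ m := by nlinarith
  lift A to ℕ using hA0
  have hw := hasWalk_of_eq_add_sub hσ hτ hστ (A := A) (B := m - A) (mem_Icc.2 hu) (mem_Icc.2 hv)
    (by push_cast [Nat.cast_sub (show A ≤ m by exact_mod_cast hAm)]; linarith)
  rwa [Nat.add_sub_cancel' (by exact_mod_cast hAm)] at hw

theorem IsStepPair.exists_hasWalk_of_gcd_dvd (hστ : IsStepPair n S T σ τ) {c p : ℤ}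
    (hc : c ∈ Icc (1 : ℤ) n) (hp : p ∈ Icc (1 : ℤ) n) (h : (Nat.gcd τ (σ + τ) : ℤ) ∣ c - p) :
    ∃ m, m < n + σ + τ ∧ HasWalk n S T m c p ∧ ((σ : ℤ) + τ) ∣ p - c + m * τ := by
  obtain ⟨m, hm₁, hm₂, hm⟩ := exists_dvd_mul_sub (n - 1) hστ.add_pos τ h
  have hm' : ((σ : ℤ) + τ) ∣ p - c + m * τ := by push_cast at hm; convert hm using 1; ring
  exact ⟨m, by omega, hστ.hasWalk_of_dvd (by omega) hc hp hm', hm'⟩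

end TwoLetter

section Defects

variable {n : ℕ} {S T : Finset ℕ} {σ τ : ℕ}

/-- A walk with steps `+σ` and `-τ` from `c` to `c'` of length `m` has
`c' - c + m * τ ≡ 0 (mod σ + τ)`; `D` is a defect if, from every vertex, some walk of length at
most `L` realises `c' - c + m * τ ≡ D` instead. -/
def IsDefect (n : ℕ) (S T : Finset ℕ) (σ τ L : ℕ) (D : ℤ) : Prop :=
  ∀ c ∈ Icc (1 : ℤ) n, ∃ m ≤ L, ∃ c', HasWalk n S T m c c' ∧ ((σ : ℤ) + τ) ∣ c' - c + m * τ - D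

theorem isDefect_zero : IsDefect n S T σ τ 0 0 :=
  fun c _ => ⟨0, le_rfl, c, hasWalk_zero_iff.2 rfl, by simp⟩

theorem IsDefect.mono {L L' : ℕ} {D : ℤ} (h : IsDefect n S T σ τ L D) (hL : L ≤ L') :
    IsDefect n S T σ τ L' D := fun c hc =>
  let ⟨m, hm, rest⟩ := h c hc
  ⟨m, hm.trans hL, rest⟩

theorem IsDefect.of_dvd_sub {L : ℕ} {D D' : ℤ} (h : IsDefect n S T σ τ L D)
    (hD : ((σ : ℤ) + τ) ∣ D - D') : IsDefect n S T σ τ L D' := fun c hc => by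
  obtain ⟨m, hm, c', hw, hdvd⟩ := h c hc
  exact ⟨m, hm, c', hw, by simpa using hdvd.add hD⟩

theorem IsDefect.add {L L' : ℕ} {D D' : ℤ} (h : IsDefect n S T σ τ L D)
    (h' : IsDefect n S T σ τ L' D') : IsDefect n S T σ τ (L + L') (D + D') := fun c hc => by
  obtain ⟨m, hm, c₁, hw, hdvd⟩ := h c hc
  obtain ⟨m', hm', c₂, hw', hdvd'⟩ := h' c₁ (hw.mem_Icc_right hc)
  refine ⟨m + m', by omega, c₂, hw.append hw', ?_⟩
  rw [show c₂ - c + ((m + m' : ℕ) : ℤ) * τ - (D + D')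
      = (c₁ - c + m * τ - D) + (c₂ - c₁ + m' * τ - D') by push_cast; ring]
  exact hdvd.add hdvd'

theorem IsDefect.nsmul {L : ℕ} {D : ℤ} (h : IsDefect n S T σ τ L D) (k : ℕ) :
    IsDefect n S T σ τ (k * L) (k * D) := by
  induction k with
  | zero => simpa using isDefect_zero
  | succ k ih => simpa [add_mul] using ih.add h

theorem IsDefect.of_dvd {L : ℕ} {D₀ D : ℤ} (h : IsDefect n S T σ τ L D₀) (hg : 0 < σ + τ)
    (hD : D₀ ∣ D) : IsDefect n S T σ τ ((σ + τ) * L) D := by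
  obtain ⟨q, rfl⟩ := hD
  have hr0 := Int.emod_nonneg q (by omega : ((σ + τ : ℕ) : ℤ) ≠ 0)
  have hrg := Int.emod_lt_of_pos q (by omega : (0 : ℤ) < (σ + τ : ℕ))
  refine ((h.nsmul (q % (σ + τ : ℕ)).toNat).mono ?_).of_dvd_sub ?_
  · exact Nat.mul_le_mul_right _ (by omega)
  · rw [Int.toNat_of_nonneg hr0, mul_comm D₀, ← sub_mul]
    exact_mod_cast (Int.mod_modEq q _).symm.dvd.mul_right _

theorem IsDefect.hasWalk (hστ : IsStepPair n S T σ τ) {L i : ℕ} {u v : ℤ}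
    (h : IsDefect n S T σ τ L (v - u + i * τ)) (hi : L + n ≤ i) (hu : u ∈ Icc (1 : ℤ) n)
    (hv : v ∈ Icc (1 : ℤ) n) : HasWalk n S T i u v := by
  obtain ⟨m, hm, c, hw, hdvd⟩ := h u hu
  have hw' := hστ.hasWalk_of_dvd (m := i - m) (by omega) (hw.mem_Icc_right hu) hv (by
    rw [show v - c + ((i - m : ℕ) : ℤ) * τ = -(c - u + m * τ - (v - u + i * τ)) by
      push_cast [Nat.cast_sub (by omega : m ≤ i)]; ring]
    exact hdvd.neg_right)
  simpa [Nat.add_sub_cancel' (by omega : m ≤ i)] using hw.append hw'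

theorem IsStepPair.isDefect_of_forall_exists_toepArc (hστ : IsStepPair n S T σ τ) {δ : ℤ}
    (h : ∀ c ∈ Icc (1 : ℤ) n, ∃ p, (Nat.gcd τ (σ + τ) : ℤ) ∣ c - p ∧ ToepArc n S T p (p + δ)) :
    IsDefect n S T σ τ (n + σ + τ) (δ + τ) := fun c hc => by
  obtain ⟨p, hcp, harc⟩ := h c hc
  obtain ⟨m, hm, hw, hdvd⟩ := hστ.exists_hasWalk_of_gcd_dvd hc harc.1 hcp
  refine ⟨m + 1, by omega, p + δ, hw.append harc.hasWalk_one, ?_⟩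
  rw [show p + δ - c + ((m + 1 : ℕ) : ℤ) * τ - (δ + τ) = p - c + m * τ by push_cast; ring]
  exact hdvd

/-- With `e = gcd τ (σ + τ)`, the step `+s'` is taken from the vertex of `[1, e]` congruent to `c`
modulo `e`; the step `-t'` below is taken from such a vertex of `[n - e + 1, n]`. -/
theorem IsStepPair.isDefect_of_mem_left {s' : ℕ} (hστ : IsStepPair n S T σ τ) (hs' : s' ∈ S)
    (hs'τ : s' + τ ≤ n) : IsDefect n S T σ τ (n + σ + τ) (s' + τ) := by
  set e := Nat.gcd τ (σ + τ)
  have he : 0 < e := Nat.gcd_pos_of_pos_left _ hστ.right_pos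
  have heτ : e ≤ τ := Nat.le_of_dvd hστ.right_pos (Nat.gcd_dvd_left _ _)
  refine hστ.isDefect_of_forall_exists_toepArc fun c hc => ⟨1 + (c - 1) % e, ?_, ?_⟩
  · rw [show c - (1 + (c - 1) % e) = c - 1 - (c - 1) % e by ring]
    exact (Int.mod_modEq (c - 1) e).dvd
  · have := Int.emod_nonneg (c - 1) (by omega : (e : ℤ) ≠ 0)
    have := Int.emod_lt_of_pos (c - 1) (by omega : (0 : ℤ) < e)
    exact ⟨mem_Icc.2 (by omega), mem_Icc.2 (by omega), .inl ⟨s', hs', rfl⟩⟩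

theorem IsStepPair.isDefect_of_mem_right {t' : ℕ} (hστ : IsStepPair n S T σ τ) (ht' : t' ∈ T)
    (hσt' : σ + t' ≤ n) : IsDefect n S T σ τ (n + σ + τ) (-t' + τ) := by
  set e := Nat.gcd τ (σ + τ)
  have he : 0 < e := Nat.gcd_pos_of_pos_left _ hστ.right_pos
  have heσ : e ≤ σ := Nat.le_of_dvd hστ.left_pos
    ((Nat.dvd_add_left (Nat.gcd_dvd_left _ _)).1 (Nat.gcd_dvd_right _ _))
  refine hστ.isDefect_of_forall_exists_toepArc fun c hc => ⟨n - (n - c) % e, ?_, ?_⟩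
  · rw [show c - (n - (n - c) % e) = -(n - c - (n - c) % e) by ring]
    exact (Int.mod_modEq (n - c) e).dvd.neg_right
  · have := Int.emod_nonneg (n - c) (by omega : (e : ℤ) ≠ 0)
    have := Int.emod_lt_of_pos (n - c) (by omega : (0 : ℤ) < e)
    exact ⟨mem_Icc.2 (by omega), mem_Icc.2 (by omega), .inr ⟨t', ht', (sub_eq_add_neg _ _).symm⟩⟩

/-- Closed under negation because `-D ≡ (σ + τ - 1) * D (mod σ + τ)`. -/
def defectSubgroup (n : ℕ) (S T : Finset ℕ) (σ τ : ℕ) (hg : 0 < σ + τ) : AddSubgroup ℤ where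
  carrier := {D | ∃ L, IsDefect n S T σ τ L D}
  zero_mem' := ⟨0, isDefect_zero⟩
  add_mem' := fun ⟨L, h⟩ ⟨L', h'⟩ => ⟨L + L', h.add h'⟩
  neg_mem' := fun {D} ⟨L, h⟩ => ⟨(σ + τ - 1) * L, (h.nsmul _).of_dvd_sub
    ⟨D, by push_cast [Nat.cast_sub (show 1 ≤ σ + τ by omega)]; ring⟩⟩

theorem mem_defectSubgroup {hg : 0 < σ + τ} {D : ℤ} :
    D ∈ defectSubgroup n S T σ τ hg ↔ ∃ L, IsDefect n S T σ τ L D :=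
  Iff.rfl

theorem IsStepPair.add_mem_defectSubgroup {s' t' : ℕ} (hστ : IsStepPair n S T σ τ)
    (hs' : s' ∈ S) (ht' : t' ∈ T) (hs'τ : s' + τ ≤ n) (hσt' : σ + t' ≤ n) :
    (s' + t' : ℤ) ∈ defectSubgroup n S T σ τ hστ.add_pos := by
  have := (defectSubgroup n S T σ τ hστ.add_pos).sub_mem
    (mem_defectSubgroup.2 ⟨_, hστ.isDefect_of_mem_left hs' hs'τ⟩)
    (mem_defectSubgroup.2 ⟨_, hστ.isDefect_of_mem_right ht' hσt'⟩)
  rwa [show (s' + τ : ℤ) - (-t' + τ) = s' + t' by ring] at this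

end Defects

theorem natCast_finset_gcd_mem {ι : Type*} (F : Finset ι) (f : ι → ℕ) {H : AddSubgroup ℤ}
    (h : ∀ i ∈ F, (f i : ℤ) ∈ H) : ((F.gcd f : ℕ) : ℤ) ∈ H := by
  classical
  induction F using Finset.induction_on with
  | empty => simp
  | insert a F ha ih =>
    rw [gcd_insert]
    have hle : AddSubgroup.closure {(f a : ℤ), ((F.gcd f : ℕ) : ℤ)} ≤ H := by
      rw [AddSubgroup.closure_le, Set.insert_subset_iff, Set.singleton_subset_iff]
      exact ⟨h a (mem_insert_self a F), ih fun i hi => h i (mem_insert_of_mem hi)⟩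
    rw [Int.closure_eq_zmultiples, Int.gcd_natCast_natCast] at hle
    exact hle (AddSubgroup.mem_zmultiples _)

theorem exists_mem_Icc_sub_eq {n : ℕ} {ℓ : ℤ} (h₁ : -((n : ℤ) - 1) ≤ ℓ) (h₂ : ℓ ≤ (n : ℤ) - 1) :
    ∃ u ∈ Icc (1 : ℤ) n, ∃ v ∈ Icc (1 : ℤ) n, v - u = ℓ :=
  ⟨max 1 (1 - ℓ), mem_Icc.2 (by omega), max 1 (1 - ℓ) + ℓ, mem_Icc.2 (by omega), by ring⟩

theorem eventually_P_eq_Q_eq_R_general (n k₁ k₂ : ℕ)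
    (s : Fin (k₁ + 1) → ℕ) (t : Fin (k₂ + 1) → ℕ)
    (hs : StrictMono s) (ht : StrictMono t)
    (hsmem : ∀ i, s i ∈ Finset.Icc 1 (n - 1)) (htmem : ∀ j, t j ∈ Finset.Icc 1 (n - 1))
    (hST1 : s (Fin.last k₁) + t 0 ≤ n) (hST2 : s 0 + t (Fin.last k₂) ≤ n)
    (d : ℕ)
    (hd : d = Finset.univ.gcd (fun p : Fin (k₁ + 1) × Fin (k₂ + 1) => s p.1 + t p.2))
    (P Q R : ℕ → Set ℤ)
    (hP : ∀ i, P i =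
      {ℓ : ℤ | -((n : ℤ) - 1) ≤ ℓ ∧ ℓ ≤ (n : ℤ) - 1 ∧ (d : ℤ) ∣ ℓ - (i : ℤ) * (s 0 : ℤ)})
    (hQ : ∀ i, Q i =
      {ℓ : ℤ | -((n : ℤ) - 1) ≤ ℓ ∧ ℓ ≤ (n : ℤ) - 1 ∧
        ∃ a : Fin (k₁ + 1) → ℕ, ∃ b : Fin (k₂ + 1) → ℕ,
          (∑ j, a j) + (∑ j, b j) = i ∧
          ℓ = ∑ j, (a j : ℤ) * (s j : ℤ) - ∑ j, (b j : ℤ) * (t j : ℤ)})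
    (hR : ∀ i, R i =
      {ℓ : ℤ | -((n : ℤ) - 1) ≤ ℓ ∧ ℓ ≤ (n : ℤ) - 1 ∧
        ∀ u v : ℤ, u ∈ Finset.Icc (1 : ℤ) (n : ℤ) → v ∈ Finset.Icc (1 : ℤ) (n : ℤ) →
          v - u = ℓ →
          HasWalk n (Finset.image s Finset.univ) (Finset.image t Finset.univ) i u v}) :
    ∃ M : ℕ, 0 < M ∧ ∀ i : ℕ, M ≤ i → P i = Q i ∧ Q i = R i := by
  have hsτ (j) : s j + t 0 ≤ n := (Nat.add_le_add_right (hs.monotone (Fin.le_last j)) _).trans hST1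
  have hσt (k) : s 0 + t k ≤ n := (Nat.add_le_add_left (ht.monotone (Fin.le_last k)) _).trans hST2
  have hpair : IsStepPair n (univ.image s) (univ.image t) (s 0) (t 0) :=
    ⟨mem_image_of_mem s (mem_univ 0), mem_image_of_mem t (mem_univ 0), (mem_Icc.1 (hsmem 0)).1,
      (mem_Icc.1 (htmem 0)).1, hsτ 0⟩
  have hdvd (j k) : (d : ℤ) ∣ s j + t k := by
    exact_mod_cast hd ▸ Finset.gcd_dvd (mem_univ (j, k))
  obtain ⟨L, hL⟩ := mem_defectSubgroup.1 <| hd ▸ natCast_finset_gcd_mem _ _ fun p _ => by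
    exact_mod_cast hpair.add_mem_defectSubgroup (mem_image_of_mem s (mem_univ p.1))
      (mem_image_of_mem t (mem_univ p.2)) (hsτ p.1) (hσt p.2)
  refine ⟨(s 0 + t 0) * L + n, Nat.add_pos_right _ (hpair.add_pos.trans_le hpair.add_le),
    fun i hi => ?_⟩
  have hQP : Q i ⊆ P i := by
    rw [hP, hQ]
    rintro ℓ ⟨h₁, h₂, a, b, rfl, rfl⟩
    exact ⟨h₁, h₂, dvd_sum_mul_sub_sum_mul_sub hdvd 0 0 a b⟩
  have hRQ : R i ⊆ Q i := by
    rw [hR, hQ]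
    rintro ℓ ⟨h₁, h₂, hw⟩
    obtain ⟨u, hu, v, hv, rfl⟩ := exists_mem_Icc_sub_eq h₁ h₂
    exact ⟨h₁, h₂, (hw u v hu hv rfl).exists_counts⟩
  have hPR : P i ⊆ R i := by
    rw [hP, hR]
    rintro ℓ ⟨h₁, h₂, hℓ⟩
    refine ⟨h₁, h₂, fun u v hu hv huv => (hL.of_dvd hpair.add_pos ?_).hasWalk hpair hi hu hv⟩
    rw [huv, show ℓ + i * t 0 = ℓ - i * s 0 + i * (s 0 + t 0) by ring]
    exact hℓ.add ((hdvd 0 0).mul_left _)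
  exact ⟨(hPR.trans hRQ).antisymm hQP, (hQP.trans hPR).antisymm hRQ⟩

/-- If `max S + min T ≤ n` and `min S + max T ≤ n`, then there is a
positive integer `M` such that `P_i = Q_i = R_i` for every `i ≥ M`. -/
theorem eventually_P_eq_Q_eq_R (n k₁ k₂ : ℕ) (hn : 2 ≤ n)
    (s : Fin (k₁ + 1) → ℕ) (t : Fin (k₂ + 1) → ℕ)
    (hs : StrictMono s) (ht : StrictMono t)
    (hsmem : ∀ i, s i ∈ Finset.Icc 1 (n - 1)) (htmem : ∀ j, t j ∈ Finset.Icc 1 (n - 1))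
    (hST1 : s (Fin.last k₁) + t 0 ≤ n) (hST2 : s 0 + t (Fin.last k₂) ≤ n)
    (d : ℕ)
    (hd : d = Finset.univ.gcd (fun p : Fin (k₁ + 1) × Fin (k₂ + 1) => s p.1 + t p.2))
    (P Q R : ℕ → Set ℤ)
    (hP : ∀ i, P i =
      {ℓ : ℤ | -((n : ℤ) - 1) ≤ ℓ ∧ ℓ ≤ (n : ℤ) - 1 ∧ (d : ℤ) ∣ ℓ - (i : ℤ) * (s 0 : ℤ)})
    (hQ : ∀ i, Q i =
      {ℓ : ℤ | -((n : ℤ) - 1) ≤ ℓ ∧ ℓ ≤ (n : ℤ) - 1 ∧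
        ∃ a : Fin (k₁ + 1) → ℕ, ∃ b : Fin (k₂ + 1) → ℕ,
          (∑ j, a j) + (∑ j, b j) = i ∧
          ℓ = ∑ j, (a j : ℤ) * (s j : ℤ) - ∑ j, (b j : ℤ) * (t j : ℤ)})
    (hR : ∀ i, R i =
      {ℓ : ℤ | -((n : ℤ) - 1) ≤ ℓ ∧ ℓ ≤ (n : ℤ) - 1 ∧
        ∀ u v : ℤ, u ∈ Finset.Icc (1 : ℤ) (n : ℤ) → v ∈ Finset.Icc (1 : ℤ) (n : ℤ) →
          v - u = ℓ →
          HasWalk n (Finset.image s Finset.univ) (Finset.image t Finset.univ) i u v}) :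
    ∃ M : ℕ, 0 < M ∧ ∀ i : ℕ, M ≤ i → P i = Q i ∧ Q i = R i :=
  eventually_P_eq_Q_eq_R_general n k₁ k₂ s t hs ht hsmem htmem hST1 hST2 d hd P Q R hP hQ hR
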